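/- Let G be a simple connected graph on p vertices with diameter d, and L₀ ⊆ V(G), k = diam(L₀), δ as above. If rn(G) = (p−1)(d−k+1) + δ − 2·Σ_v d(v,L₀), then there exists an ordering x₀,...,x_{p−1} of V(G) induced by an optimal radio labeling φ such that: (a) d(x_i, x_{i+1}) = d(x_i, L₀) + d(x_{i+1}, L₀) + k for all i; (b) x₀, x_{p−1} ∈ L₀ if |L₀| ≥ 2, and x₀ ∈ L₀, d(x_{p−1}, L₀) = 1 if |L₀| = 1; (c) φ(x₀) = 0 and φ(x_{i+1}) = φ(x_i) + d + 1 − d(x_i, L₀) − d(x_{i+1}, L₀) − k. -/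

import Mathlib

open SimpleGraph Finset

/-- The Petersen graph as the Kneser graph K(5,2). -/
def petersen : SimpleGraph {s : Finset (Fin 5) // s.card = 2} where
  Adj a b := Disjoint a.1 b.1
  symm := ⟨fun _ _ h => h.symm⟩
  loopless := ⟨fun a h => by
    have h0 : a.1 = ⊥ := disjoint_self.mp h
    have h2 := a.2
    rw [h0] at h2
    simp at h2⟩

/-- A radio labeling of `G`: for all distinct `u, v`,
`d(u,v) + |φ(u) - φ(v)| ≥ diam(G) + 1`. -/
def IsRadioLabeling {V : Type*} (G : SimpleGraph V) (φ : V → ℕ) : Prop :=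
  ∀ u v : V, u ≠ v → (G.diam : ℤ) + 1 ≤ (G.dist u v : ℤ) + |(φ u : ℤ) - (φ v : ℤ)|

/-- The span of a labeling: the maximum difference between two labels. -/
noncomputable def span {V : Type*} (φ : V → ℕ) : ℕ :=
  sSup (Set.range fun p : V × V => φ p.1 - φ p.2)

/-- The radio number of `G`: the minimum span over all radio labelings. -/
noncomputable def radioNumber {V : Type*} (G : SimpleGraph V) : ℕ :=
  sInf {s | ∃ φ : V → ℕ, IsRadioLabeling G φ ∧ span φ = s}

/-- `d(v, S)`: the minimum distance from `v` to a vertex of `S`. -/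
noncomputable def distToSet {V : Type*} (G : SimpleGraph V) (v : V) (S : Finset V) : ℕ :=
  sInf ((fun w => G.dist v w) '' ↑S)

/-- `diam(S)`: the maximum distance in `G` between two vertices of `S`. -/
noncomputable def setDiam {V : Type*} (G : SimpleGraph V) (S : Finset V) : ℕ :=
  sSup {d | ∃ x ∈ S, ∃ y ∈ S, G.dist x y = d}

/-!
List the vertices as `x₀, …, xₚ₋₁` in increasing order of an optimal radio labeling `φ`. By the
radio condition and the triangle inequality through `L₀`, each gap satisfies
`φ(xᵢ₊₁) - φ(xᵢ) ≥ d + 1 - d(xᵢ, xᵢ₊₁) ≥ d + 1 - d(xᵢ, L₀) - d(xᵢ₊₁, L₀) - k`. Summing, the span is at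
least `(p - 1)(d - k + 1) - 2 Σ d(v, L₀) + d(x₀, L₀) + d(xₚ₋₁, L₀)`, so the assumed value of
`rn(G)` forces `d(x₀, L₀) + d(xₚ₋₁, L₀) = δ` and every gap to be tight. One end of the
ordering therefore lies in `L₀`; reflecting `φ` to `φ(xₚ₋₁) - φ` if necessary, it is `x₀`.
-/

open Function

section Ordering

variable {α β : Type*}

lemma exists_bijective_strictMono_comp [Fintype α] [LinearOrder β] {f : α → β}
    (hf : Injective f) {n : ℕ} (hn : Fintype.card α = n) :
    ∃ x : Fin n → α, Bijective x ∧ StrictMono (f ∘ x) := by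
  let : LinearOrder α := LinearOrder.lift' f hf
  let e := Fintype.orderIsoFinOfCardEq α hn
  exact ⟨e, e.bijective, e.strictMono⟩

variable [Preorder β] {f : α → β} {m : ℕ} {x : Fin (m + 1) → α}

lemma apply_zero_le_of_monotone_comp (hx : Surjective x) (hf : Monotone (f ∘ x)) (v : α) :
    f (x 0) ≤ f v := by
  obtain ⟨i, rfl⟩ := hx v
  exact hf (Fin.zero_le i)

lemma le_apply_last_of_monotone_comp (hx : Surjective x) (hf : Monotone (f ∘ x)) (v : α) :
    f v ≤ f (x (Fin.last m)) := by
  obtain ⟨i, rfl⟩ := hx v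
  exact hf (Fin.le_last i)

end Ordering

lemma Fin.sum_univ_succ_sub_castSucc {M : Type*} [AddCommGroup M] :
    ∀ {m : ℕ} (f : Fin (m + 1) → M),
      ∑ t : Fin m, (f t.succ - f t.castSucc) = f (Fin.last m) - f 0
  | 0, f => by simp
  | m + 1, f => by
    have ih := Fin.sum_univ_succ_sub_castSucc fun i : Fin (m + 1) => f i.castSucc
    simp only [← Fin.succ_castSucc] at ih
    rw [Fin.sum_univ_castSucc, ih]
    simp

lemma Fin.sum_univ_castSucc_add_succ {M : Type*} [AddCommGroup M] {m : ℕ}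
    (f : Fin (m + 1) → M) :
    ∑ t : Fin m, (f t.castSucc + f t.succ) = ∑ i, f i - f (Fin.last m) + (∑ i, f i - f 0) := by
  rw [sum_add_distrib, eq_sub_of_add_eq (Fin.sum_univ_castSucc f).symm,
    eq_sub_of_add_eq' (Fin.sum_univ_succ f).symm]

section Labeling

variable {V : Type*} {G : SimpleGraph V}

lemma IsRadioLabeling.of_abs_sub_eq {φ ψ : V → ℕ} (hφ : IsRadioLabeling G φ)
    (h : ∀ u v, |(ψ u : ℤ) - ψ v| = |(φ u : ℤ) - φ v|) : IsRadioLabeling G ψ :=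
  fun u v huv => h u v ▸ hφ u v huv

lemma IsRadioLabeling.injective [Finite V] (hG : G.Connected) {φ : V → ℕ}
    (hφ : IsRadioLabeling G φ) : Injective φ := by
  intro u v h
  by_contra huv
  have : Nonempty V := hG.nonempty
  have hdist : G.dist u v ≤ G.diam := dist_le_diam (connected_iff_ediam_ne_top.mp hG)
  have hrad := hφ u v huv
  rw [h, sub_self, abs_zero] at hrad
  omega

lemma span_eq_sub {φ : V → ℕ} {a b : V} (hmax : ∀ v, φ v ≤ φ a) (hmin : ∀ v, φ b ≤ φ v) :
    span φ = φ a - φ b := by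
  have hbound : ∀ n ∈ Set.range fun p : V × V => φ p.1 - φ p.2, n ≤ φ a - φ b := by
    rintro n ⟨p, rfl⟩
    exact tsub_le_tsub (hmax p.1) (hmin p.2)
  exact le_antisymm (csSup_le ⟨_, ⟨(a, b), rfl⟩⟩ hbound) (le_csSup ⟨_, hbound⟩ ⟨(a, b), rfl⟩)

lemma exists_isRadioLabeling_span_eq_radioNumber [Fintype V] (G : SimpleGraph V) :
    ∃ φ : V → ℕ, IsRadioLabeling G φ ∧ span φ = radioNumber G := by
  let φ : V → ℕ := fun v => Fintype.equivFin V v * (G.diam + 1)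
  have hφ : IsRadioLabeling G φ := by
    intro u v huv
    have hne : ((Fintype.equivFin V u : ℕ) : ℤ) - Fintype.equivFin V v ≠ 0 := by
      rw [sub_ne_zero]
      exact_mod_cast Fin.val_injective.ne ((Fintype.equivFin V).injective.ne huv)
    have hgap : |(φ u : ℤ) - φ v|
        = |((Fintype.equivFin V u : ℕ) : ℤ) - Fintype.equivFin V v| * (G.diam + 1) := by
      simp only [φ]
      push_cast
      rw [← sub_mul, abs_mul, abs_of_nonneg (by positivity : (0 : ℤ) ≤ G.diam + 1)]
    rw [hgap]
    nlinarith [Int.one_le_abs hne, (G.dist u v).cast_nonneg (α := ℤ)]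
  exact Nat.sInf_mem (s := {s | ∃ φ : V → ℕ, IsRadioLabeling G φ ∧ span φ = s}) ⟨_, φ, hφ, rfl⟩

end Labeling

section SetDistance

variable {V : Type*} {G : SimpleGraph V} {S : Finset V}

lemma exists_mem_dist_eq_distToSet (v : V) (hS : S.Nonempty) :
    ∃ w ∈ S, G.dist v w = distToSet G v S :=
  Nat.sInf_mem (hS.to_set.image _)

lemma distToSet_le_dist (v : V) {w : V} (hw : w ∈ S) : distToSet G v S ≤ G.dist v w :=
  Nat.sInf_le ⟨w, hw, rfl⟩

lemma distToSet_eq_zero_iff (hG : G.Connected) (hS : S.Nonempty) {v : V} :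
    distToSet G v S = 0 ↔ v ∈ S := by
  refine ⟨fun h => ?_, fun hv => by simpa using distToSet_le_dist (G := G) v hv⟩
  obtain ⟨w, hw, hvw⟩ := exists_mem_dist_eq_distToSet (G := G) v hS
  rwa [hG.dist_eq_zero_iff.mp (hvw.trans h)]

lemma dist_le_setDiam {a b : V} (ha : a ∈ S) (hb : b ∈ S) : G.dist a b ≤ setDiam G S := by
  have hfin : {d | ∃ x ∈ S, ∃ y ∈ S, G.dist x y = d}.Finite := by
    refine ((S ×ˢ S).finite_toSet.image fun p => G.dist p.1 p.2).subset ?_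
    rintro _ ⟨x, hx, y, hy, rfl⟩
    exact ⟨(x, y), by simp [hx, hy], rfl⟩
  exact le_csSup hfin.bddAbove ⟨a, ha, b, hb, rfl⟩

lemma dist_le_distToSet_add_distToSet_add_setDiam (hG : G.Connected) (hS : S.Nonempty)
    (u v : V) : G.dist u v ≤ distToSet G u S + distToSet G v S + setDiam G S := by
  obtain ⟨a, ha, hua⟩ := exists_mem_dist_eq_distToSet (G := G) u hS
  obtain ⟨b, hb, hvb⟩ := exists_mem_dist_eq_distToSet (G := G) v hS
  calc G.dist u v ≤ G.dist u a + (G.dist a b + G.dist b v) :=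
        hG.dist_triangle.trans (Nat.add_le_add_left hG.dist_triangle _)
    _ = G.dist u a + G.dist v b + G.dist a b := by rw [dist_comm (u := b)]; ring
    _ ≤ distToSet G u S + distToSet G v S + setDiam G S := by
        rw [hua, hvb]; exact Nat.add_le_add_left (dist_le_setDiam ha hb) _

end SetDistance

section RadioBound

variable {V : Type*} {G : SimpleGraph V} {L₀ : Finset V} {φ : V → ℕ} {u v : V}

lemma IsRadioLabeling.gap_lower_bound (hG : G.Connected) (hL : L₀.Nonempty)
    (hφ : IsRadioLabeling G φ) (huv : φ u < φ v) :
    (G.diam : ℤ) + 1 - distToSet G u L₀ - distToSet G v L₀ - setDiam G L₀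
      ≤ (φ v : ℤ) - φ u := by
  have hrad := hφ u v fun h => huv.ne (congrArg φ h)
  rw [abs_sub_comm, abs_of_pos (sub_pos.mpr (by exact_mod_cast huv))] at hrad
  have hdist : (G.dist u v : ℤ) ≤ distToSet G u L₀ + distToSet G v L₀ + setDiam G L₀ := by
    exact_mod_cast dist_le_distToSet_add_distToSet_add_setDiam hG hL u v
  linarith

lemma IsRadioLabeling.dist_eq_of_gap_eq (hG : G.Connected) (hL : L₀.Nonempty)
    (hφ : IsRadioLabeling G φ) (huv : φ u < φ v)
    (hgap : (φ v : ℤ) = φ u + G.diam + 1 - distToSet G u L₀ - distToSet G v L₀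
      - setDiam G L₀) :
    G.dist u v = distToSet G u L₀ + distToSet G v L₀ + setDiam G L₀ := by
  have hrad := hφ u v fun h => huv.ne (congrArg φ h)
  rw [abs_sub_comm, abs_of_pos (sub_pos.mpr (by exact_mod_cast huv))] at hrad
  have hdist := dist_le_distToSet_add_distToSet_add_setDiam hG hL u v
  zify at hdist ⊢
  linarith

variable [Fintype V] {m : ℕ}

theorem IsRadioLabeling.tight_of_radioNumber_eq (hG : G.Connected)
    (hm : Fintype.card V = m + 1) (hL : L₀.Nonempty)
    (hrn : (radioNumber G : ℤ)
      = ((Fintype.card V : ℤ) - 1) * ((G.diam : ℤ) - (setDiam G L₀ : ℤ) + 1)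
        + (if L₀.card = 1 then 1 else 0)
        - 2 * ∑ v : V, (distToSet G v L₀ : ℤ))
    (hφ : IsRadioLabeling G φ) (hspan : span φ = radioNumber G)
    {x : Fin (m + 1) → V} (hx : Bijective x) (hmono : StrictMono (φ ∘ x)) :
    (distToSet G (x 0) L₀ : ℤ) + distToSet G (x (Fin.last m)) L₀
        = (if L₀.card = 1 then 1 else 0)
      ∧ ∀ t : Fin m, (φ (x t.succ) : ℤ) = (φ (x t.castSucc) : ℤ) + (G.diam : ℤ) + 1
          - (distToSet G (x t.castSucc) L₀ : ℤ) - (distToSet G (x t.succ) L₀ : ℤ)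
          - (setDiam G L₀ : ℤ) := by
  set D : V → ℤ := fun v => distToSet G v L₀
  set δ : ℤ := if L₀.card = 1 then 1 else 0 with hδ
  set slack : Fin m → ℤ := fun t => (φ (x t.succ) : ℤ) - φ (x t.castSucc)
    - (G.diam + 1 - D (x t.castSucc) - D (x t.succ) - setDiam G L₀) with hslack
  have hslack_nonneg : ∀ t, 0 ≤ slack t := fun t =>
    sub_nonneg.2 (hφ.gap_lower_bound hG hL (hmono (Fin.castSucc_lt_succ (i := t))))
  have hspan_eq : (radioNumber G : ℤ) = φ (x (Fin.last m)) - φ (x 0) := by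
    have hle : φ (x 0) ≤ φ (x (Fin.last m)) := hmono.monotone (Fin.zero_le _)
    rw [← hspan, span_eq_sub (le_apply_last_of_monotone_comp hx.surjective hmono.monotone)
      (apply_zero_le_of_monotone_comp hx.surjective hmono.monotone),
      Nat.cast_sub hle]
  have hsum : ∑ t, slack t = δ - D (x 0) - D (x (Fin.last m)) := by
    have hsplit : ∑ t, slack t = ∑ t : Fin m, ((φ (x t.succ) : ℤ) - φ (x t.castSucc))
        + ∑ t : Fin m, (D (x t.castSucc) + D (x t.succ))
        - ∑ _t : Fin m, ((G.diam : ℤ) + 1 - setDiam G L₀) := by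
      rw [← sum_add_distrib, ← sum_sub_distrib]
      exact sum_congr rfl fun t _ => by simp only [hslack]; ring
    rw [hsplit, Fin.sum_univ_succ_sub_castSucc fun i => (φ (x i) : ℤ),
      Fin.sum_univ_castSucc_add_succ fun i => D (x i), hx.sum_comp D, ← hspan_eq, hrn, hm, sum_const, card_univ, Fintype.card_fin, nsmul_eq_mul]
    push_cast
    ring
  have hends : D (x 0) + D (x (Fin.last m)) = δ := by
    refine le_antisymm (by linarith [sum_nonneg fun t (_ : t ∈ univ) => hslack_nonneg t]) ?_
    by_cases hc : L₀.card = 1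
    · by_contra! hlt
      rw [hδ, if_pos hc] at hlt
      obtain ⟨a, ha⟩ := card_eq_one.1 hc
      have hmem : ∀ i, D (x i) = 0 → x i = a := fun i hi =>
        mem_singleton.1 (ha ▸ (distToSet_eq_zero_iff hG hL).1 (Nat.cast_eq_zero.1 hi))
      have hD_nonneg : ∀ i, 0 ≤ D (x i) := fun i => Nat.cast_nonneg _
      have h0 := hmem 0 (by linarith [hD_nonneg 0, hD_nonneg (Fin.last m)])
      have hlast := hmem (Fin.last m) (by linarith [hD_nonneg 0, hD_nonneg (Fin.last m)])
      have hm0 : 0 = m := by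
        simpa using congrArg Fin.val (hx.injective (h0.trans hlast.symm))
      subst hm0
      simp only [univ_eq_empty, sum_empty, hδ, if_pos hc] at hsum
      linarith
    · rw [hδ, if_neg hc]
      exact add_nonneg (Nat.cast_nonneg _) (Nat.cast_nonneg _)
  refine ⟨hends, fun t => ?_⟩
  have hzero := (sum_eq_zero_iff_of_nonneg fun t (_ : t ∈ univ) => hslack_nonneg t).1
    (by rw [hsum, ← hends]; ring) t (mem_univ t)
  simp only [hslack] at hzero
  linarith

end RadioBound

section Normalization

variable {V : Type*} [Fintype V] {G : SimpleGraph V} {L₀ : Finset V} {m : ℕ}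

theorem exists_optimal_radioLabeling_eq_zero_of_mem (hG : G.Connected)
    (hm : Fintype.card V = m + 1) (hL : L₀.Nonempty)
    (hrn : (radioNumber G : ℤ)
      = ((Fintype.card V : ℤ) - 1) * ((G.diam : ℤ) - (setDiam G L₀ : ℤ) + 1)
        + (if L₀.card = 1 then 1 else 0)
        - 2 * ∑ v : V, (distToSet G v L₀ : ℤ)) :
    ∃ φ : V → ℕ, IsRadioLabeling G φ ∧ span φ = radioNumber G ∧ ∃ v ∈ L₀, φ v = 0 := by
  obtain ⟨φ, hφ, hspan⟩ := exists_isRadioLabeling_span_eq_radioNumber G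
  obtain ⟨x, hx, hmono⟩ := exists_bijective_strictMono_comp (hφ.injective hG) hm
  have hmin := apply_zero_le_of_monotone_comp hx.surjective hmono.monotone
  have hmax := le_apply_last_of_monotone_comp hx.surjective hmono.monotone
  have hends := (hφ.tight_of_radioNumber_eq hG hm hL hrn hspan hx hmono).1
  have hext : distToSet G (x 0) L₀ = 0 ∨ distToSet G (x (Fin.last m)) L₀ = 0 := by
    split_ifs at hends <;> omega
  rcases hext with h0 | hlast
  · refine ⟨fun v => φ v - φ (x 0), hφ.of_abs_sub_eq fun u v => ?_, ?_, x 0,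
      (distToSet_eq_zero_iff hG hL).1 h0, Nat.sub_self _⟩
    · rw [Nat.cast_sub (hmin u), Nat.cast_sub (hmin v), sub_sub_sub_cancel_right]
    · rw [span_eq_sub (fun v => Nat.sub_le_sub_right (hmax v) _)
        (fun v => Nat.sub_le_sub_right (hmin v) _), ← hspan, span_eq_sub hmax hmin]
      omega
  · refine ⟨fun v => φ (x (Fin.last m)) - φ v, hφ.of_abs_sub_eq fun u v => ?_, ?_,
      x (Fin.last m), (distToSet_eq_zero_iff hG hL).1 hlast, Nat.sub_self _⟩
    · rw [Nat.cast_sub (hmax u), Nat.cast_sub (hmax v), sub_sub_sub_cancel_left, abs_sub_comm]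
    · rw [span_eq_sub (fun v => Nat.sub_le_sub_left (hmin v) _)
        (fun v => Nat.sub_le_sub_left (hmax v) _), ← hspan, span_eq_sub hmax hmin]
      omega

end Normalization

theorem stmt_5 {V : Type*} [Fintype V] (G : SimpleGraph V) (hG : G.Connected)
    {m : ℕ} (hm : Fintype.card V = m + 1)
    (L₀ : Finset V) (hL : L₀.Nonempty)
    (hrn : (radioNumber G : ℤ)
      = ((Fintype.card V : ℤ) - 1) * ((G.diam : ℤ) - (setDiam G L₀ : ℤ) + 1)
        + (if L₀.card = 1 then 1 else 0)
        - 2 * ∑ v : V, (distToSet G v L₀ : ℤ)) :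
    ∃ (x : Fin (m + 1) → V) (φ : V → ℕ), Function.Bijective x
      ∧ IsRadioLabeling G φ ∧ span φ = radioNumber G
      ∧ (∀ i j : Fin (m + 1), i < j → φ (x i) < φ (x j))
      ∧ (∀ t : Fin m, G.dist (x t.castSucc) (x t.succ)
          = distToSet G (x t.castSucc) L₀ + distToSet G (x t.succ) L₀ + setDiam G L₀)
      ∧ (2 ≤ L₀.card → x 0 ∈ L₀ ∧ x (Fin.last m) ∈ L₀)
      ∧ (L₀.card = 1 → x 0 ∈ L₀ ∧ distToSet G (x (Fin.last m)) L₀ = 1)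
      ∧ φ (x 0) = 0
      ∧ (∀ t : Fin m, (φ (x t.succ) : ℤ) = (φ (x t.castSucc) : ℤ) + (G.diam : ℤ) + 1
          - (distToSet G (x t.castSucc) L₀ : ℤ) - (distToSet G (x t.succ) L₀ : ℤ)
          - (setDiam G L₀ : ℤ)) := by
  obtain ⟨φ, hφ, hspan, v₀, hv₀, hφv₀⟩ := exists_optimal_radioLabeling_eq_zero_of_mem hG hm hL hrn
  obtain ⟨x, hx, hmono⟩ := exists_bijective_strictMono_comp (hφ.injective hG) hm
  have hx0 : x 0 = v₀ := hφ.injective hG <| by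
    have := apply_zero_le_of_monotone_comp hx.surjective hmono.monotone v₀
    omega
  have hD0 : distToSet G (x 0) L₀ = 0 := (distToSet_eq_zero_iff hG hL).2 (hx0 ▸ hv₀)
  obtain ⟨hends, hstep⟩ := hφ.tight_of_radioNumber_eq hG hm hL hrn hspan hx hmono
  refine ⟨x, φ, hx, hφ, hspan, fun i j => @hmono i j,
    fun t => hφ.dist_eq_of_gap_eq hG hL (hmono (Fin.castSucc_lt_succ (i := t))) (hstep t),
    fun hcard => ?_, fun hcard => ?_, hx0 ▸ hφv₀, hstep⟩
  · rw [if_neg (by omega), hD0] at hends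
    exact ⟨hx0 ▸ hv₀, (distToSet_eq_zero_iff hG hL).1 (by omega)⟩
  · rw [if_pos hcard, hD0] at hends
    exact ⟨hx0 ▸ hv₀, by omega⟩
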